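/- arXiv:1801.01092 — 3 statements merged into one kernel-verified Lean document; each statement's English description precedes it below -/
import Mathlib

section
/- For every real number n > 0 and every real s < 0, one has (1 - s/n)^(-n) - e^s ≤ 1/(e·n). -/
open Real Set

noncomputable def ntF (n : ℝ) (x : ℝ) : ℝ := (1 - x / n) ^ (-n : ℝ) - Real.exp x

noncomputable def ntG (n : ℝ) (x : ℝ) : ℝ := x + (n + 1) * Real.log (1 - x / n)

lemma nt_inner_hasDeriv (n x : ℝ) : HasDerivAt (fun y : ℝ => 1 - y / n) (-(1 / n)) x := by
  simpa using ((hasDerivAt_id x).div_const n).const_sub 1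

lemma ntF_hasDeriv {n : ℝ} (hn : 0 < n) {x : ℝ} (hb : 0 < 1 - x / n) :
    HasDerivAt (ntF n) ((1 - x / n) ^ (-n - 1 : ℝ) - Real.exp x) x := by
  have h2 := (nt_inner_hasDeriv n x).rpow_const (p := (-n : ℝ)) (Or.inl hb.ne')
  have h3 := h2.sub (Real.hasDerivAt_exp x)
  have hc : -(1 / n) * (-n) * (1 - x / n) ^ ((-n : ℝ) - 1) - Real.exp x
      = (1 - x / n) ^ (-n - 1 : ℝ) - Real.exp x := by
    have : -(1 / n) * (-n : ℝ) = 1 := by field_simp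
    rw [this]; ring_nf
  rw [hc] at h3
  exact h3

lemma ntG_hasDeriv {n : ℝ} (hn : 0 < n) {x : ℝ} (hb : 0 < 1 - x / n) :
    HasDerivAt (ntG n) (1 - (n + 1) / (n - x)) x := by
  have hnx : n - x ≠ 0 := by
    have : 0 < n * (1 - x / n) := mul_pos hn hb
    have hx : n * (1 - x / n) = n - x := by field_simp
    rw [hx] at this; exact this.ne'
  have hlog : HasDerivAt (fun y : ℝ => Real.log (1 - y / n))
      (-(1 / n) / (1 - x / n)) x := (nt_inner_hasDeriv n x).log hb.ne'
  have h := (hasDerivAt_id x).add (hlog.const_mul (n + 1))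
  have hc : 1 + (n + 1) * (-(1 / n) / (1 - x / n)) = 1 - (n + 1) / (n - x) := by
    field_simp
    ring
  rw [hc] at h
  exact h

theorem rpow_sub_exp_le (n s : ℝ) (hn : 0 < n) (hs : s < 0) :
    (1 - s / n) ^ (-n : ℝ) - Real.exp s ≤ 1 / (Real.exp 1 * n) := by
  have hbpos : ∀ x : ℝ, x ≤ 0 → 0 < 1 - x / n := by
    intro x hx
    have h1 : x / n ≤ 0 := div_nonpos_iff.mpr (Or.inr ⟨hx, hn.le⟩)
    linarith
  -- the auxiliary point a with ntG n a < 0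
  obtain ⟨m, hm⟩ : ∃ m : ℝ, m = 4 / n + 1 := ⟨_, rfl⟩
  have hmpos : 0 < m := by rw [hm]; positivity
  obtain ⟨a, ha⟩ : ∃ a : ℝ, a = n * (1 - Real.exp m) := ⟨_, rfl⟩
  have hexpm : 1 + m + m ^ 2 / 4 ≤ Real.exp m := by
    have h := Real.add_one_le_exp (m / 2)
    have hp : (0 : ℝ) ≤ 1 + m / 2 := by linarith
    have h2 : (1 + m / 2) ^ 2 ≤ (Real.exp (m / 2)) ^ 2 := by
      apply pow_le_pow_left₀ hp (by linarith)
    have h3 : (Real.exp (m / 2)) ^ 2 = Real.exp m := by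
      rw [sq, ← Real.exp_add]; ring_nf
    nlinarith [h2, h3]
  have hnm : n * m = 4 + n := by rw [hm]; field_simp
  have hnm2 : n * (m * m) = (4 + n) * m := by
    rw [← hnm]; ring
  have ha1 : a < -1 := by
    rw [ha]
    nlinarith [mul_le_mul_of_nonneg_left hexpm hn.le, hnm, hnm2, mul_pos hn hmpos,
      hmpos, hn]
  have hbase_a : 1 - a / n = Real.exp m := by
    rw [ha]; field_simp; ring
  have hga : ntG n a < 0 := by
    unfold ntG
    rw [hbase_a, Real.log_exp, ha]
    nlinarith [mul_le_mul_of_nonneg_left hexpm hn.le, hnm, hnm2, mul_pos hn hmpos,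
      hmpos, hn]
  have hg1 : 0 < ntG n (-1) := by
    have hp : (0 : ℝ) < n / (n + 1) := by positivity
    have hne : n / (n + 1) ≠ 1 := by
      intro h
      rw [div_eq_one_iff_eq (by linarith)] at h
      linarith
    have hlt := Real.log_lt_sub_one_of_pos hp hne
    have heq : (1 : ℝ) - (-1) / n = (n / (n + 1))⁻¹ := by
      rw [inv_div]; field_simp; ring
    unfold ntG
    rw [heq, Real.log_inv]
    have h2 : (n + 1) * Real.log (n / (n + 1)) < (n + 1) * (n / (n + 1) - 1) :=
      mul_lt_mul_of_pos_left hlt (by linarith)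
    have h3 : (n + 1) * (n / (n + 1) - 1) = -1 := by field_simp; ring
    linarith
  -- continuity of ntG on Icc a (-1)
  have hgc : ContinuousOn (ntG n) (Icc a (-1)) := by
    intro x hx
    have hb : 0 < 1 - x / n := hbpos x (by linarith [hx.2])
    exact ((ntG_hasDeriv hn hb).continuousAt).continuousWithinAt
  obtain ⟨s₀, hs₀mem, hgs₀⟩ := intermediate_value_Icc ha1.le hgc ⟨hga.le, hg1.le⟩
  have hs₀le : s₀ ≤ -1 := hs₀mem.2
  have hs₀neg : s₀ < 0 := by linarith
  -- ntG is positive on (s₀, 0)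
  have hGpos : ∀ x, s₀ < x → x < 0 → 0 < ntG n x := by
    intro x hx1 hx2
    rcases le_or_gt x (-1) with hx | hx
    · have hmono : StrictMonoOn (ntG n) (Icc s₀ (-1)) := by
        apply strictMonoOn_of_deriv_pos (convex_Icc _ _)
        · intro y hy
          have hb : 0 < 1 - y / n := hbpos y (by linarith [hy.2])
          exact ((ntG_hasDeriv hn hb).continuousAt).continuousWithinAt
        · intro y hy
          rw [interior_Icc] at hy
          have hb : 0 < 1 - y / n := hbpos y (by linarith [hy.2])
          rw [(ntG_hasDeriv hn hb).deriv]
          have h4 : (n + 1) / (n - y) < 1 := by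
            rw [div_lt_one (by linarith [hy.2])]
            linarith [hy.2]
          linarith
      have := hmono ⟨le_refl s₀, hs₀le⟩ ⟨hx1.le, hx⟩ hx1
      rw [hgs₀] at this
      exact this
    · have hanti : StrictAntiOn (ntG n) (Icc (-1 : ℝ) 0) := by
        apply strictAntiOn_of_deriv_neg (convex_Icc _ _)
        · intro y hy
          have hb : 0 < 1 - y / n := hbpos y hy.2
          exact ((ntG_hasDeriv hn hb).continuousAt).continuousWithinAt
        · intro y hy
          rw [interior_Icc] at hy
          have hb : 0 < 1 - y / n := hbpos y (le_of_lt hy.2)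
          rw [(ntG_hasDeriv hn hb).deriv]
          have h4 : 1 < (n + 1) / (n - y) := by
            rw [lt_div_iff₀ (by linarith [hy.2])]
            linarith [hy.1]
          linarith
      have hG0 : ntG n 0 = 0 := by
        unfold ntG
        simp
      have := hanti ⟨hx.le, hx2.le⟩ ⟨by linarith, le_refl 0⟩ hx2
      rw [hG0] at this
      exact this
  -- ntG is negative below s₀
  have hGneg : ∀ x, x < s₀ → ntG n x < 0 := by
    intro x hx
    have hmono : StrictMonoOn (ntG n) (Icc x s₀) := by
      apply strictMonoOn_of_deriv_pos (convex_Icc _ _)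
      · intro y hy
        have hb : 0 < 1 - y / n := hbpos y (by linarith [hy.2])
        exact ((ntG_hasDeriv hn hb).continuousAt).continuousWithinAt
      · intro y hy
        rw [interior_Icc] at hy
        have hb : 0 < 1 - y / n := hbpos y (by linarith [hy.2])
        rw [(ntG_hasDeriv hn hb).deriv]
        have h4 : (n + 1) / (n - y) < 1 := by
          rw [div_lt_one (by linarith [hy.2])]
          linarith [hy.2]
        linarith
    have := hmono ⟨le_refl x, hx.le⟩ ⟨hx.le, le_refl s₀⟩ hx
    rw [hgs₀] at this
    exact this
  -- derivative of ntF as exp difference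
  have hFderiv : ∀ x : ℝ, x ≤ 0 →
      deriv (ntF n) x = Real.exp (x - ntG n x) - Real.exp x := by
    intro x hx
    have hb : 0 < 1 - x / n := hbpos x hx
    rw [(ntF_hasDeriv hn hb).deriv]
    congr 1
    rw [Real.rpow_def_of_pos hb]
    congr 1
    unfold ntG
    ring
  have hFcont : ∀ x : ℝ, x ≤ 0 → ContinuousAt (ntF n) x := by
    intro x hx
    exact (ntF_hasDeriv hn (hbpos x hx)).continuousAt
  have hFdiff : ∀ x : ℝ, x ≤ 0 → DifferentiableAt ℝ (ntF n) x := by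
    intro x hx
    exact (ntF_hasDeriv hn (hbpos x hx)).differentiableAt
  -- f s ≤ f s₀
  have hmain : ntF n s ≤ ntF n s₀ := by
    rcases le_or_gt s₀ s with hcase | hcase
    · have hanti : AntitoneOn (ntF n) (Icc s₀ 0) := by
        apply antitoneOn_of_deriv_nonpos (convex_Icc _ _)
        · intro y hy
          exact (hFcont y hy.2).continuousWithinAt
        · intro y hy
          rw [interior_Icc] at hy
          exact ((hFdiff y hy.2.le)).differentiableWithinAt
        · intro y hy
          rw [interior_Icc] at hy
          rw [hFderiv y hy.2.le]
          have hg := hGpos y hy.1 hy.2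
          have := Real.exp_le_exp.mpr (show y - ntG n y ≤ y by linarith)
          linarith
      exact hanti ⟨le_refl s₀, hs₀neg.le⟩ ⟨hcase, hs.le⟩ hcase
    · have hmono : MonotoneOn (ntF n) (Icc s s₀) := by
        apply monotoneOn_of_deriv_nonneg (convex_Icc _ _)
        · intro y hy
          exact (hFcont y (by linarith [hy.2])).continuousWithinAt
        · intro y hy
          rw [interior_Icc] at hy
          exact (hFdiff y (by linarith [hy.2])).differentiableWithinAt
        · intro y hy
          rw [interior_Icc] at hy
          rw [hFderiv y (by linarith [hy.2])]
          have hg := hGneg y hy.2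
          have := Real.exp_le_exp.mpr (show y ≤ y - ntG n y by linarith)
          linarith
      exact hmono ⟨le_refl s, hcase.le⟩ ⟨hcase.le, le_refl s₀⟩ hcase.le
  -- value at s₀
  have hb0 : 0 < 1 - s₀ / n := hbpos s₀ hs₀neg.le
  have hL : (n + 1) * Real.log (1 - s₀ / n) = -s₀ := by
    have h := hgs₀
    unfold ntG at h
    linarith
  have hval : ntF n s₀ = (-s₀ / n) * Real.exp s₀ := by
    unfold ntF
    rw [Real.rpow_def_of_pos hb0]
    have h2 : Real.log (1 - s₀ / n) * (-n) = s₀ + Real.log (1 - s₀ / n) := by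
      linarith [hL]
    rw [h2, Real.exp_add, Real.exp_log hb0]
    have hns : (1 - s₀ / n) = (n - s₀) / n := by field_simp
    field_simp
    ring
  have key : (-s₀) * Real.exp s₀ ≤ Real.exp (-1 : ℝ) := by
    have h := Real.add_one_le_exp (-s₀ - 1)
    have h2 := mul_le_mul_of_nonneg_right
      (show -s₀ ≤ Real.exp (-s₀ - 1) by linarith) (Real.exp_pos s₀).le
    have h3 : Real.exp (-s₀ - 1) * Real.exp s₀ = Real.exp (-1 : ℝ) := by
      rw [← Real.exp_add]; ring_nf
    linarith [h2, h3.le, h3.ge]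
  have hfinal : ntF n s₀ ≤ 1 / (Real.exp 1 * n) := by
    rw [hval]
    have h1 : -s₀ / n * Real.exp s₀ = (-s₀ * Real.exp s₀) / n := by ring
    have h2 : 1 / (Real.exp 1 * n) = Real.exp (-1 : ℝ) / n := by
      rw [Real.exp_neg, inv_eq_one_div, div_div]
    rw [h1, h2]
    gcongr
  have : ntF n s ≤ 1 / (Real.exp 1 * n) := le_trans hmain hfinal
  unfold ntF at this
  exact this
end

section
/- Fix a real number n > 0. The map s ↦ (1 - s/n)^(-n), defined on (-∞, 0], converges uniformly on (-∞, 0] to s ↦ e^s as n → ∞. More precisely, sup_{s ≤ 0} |(1 - s/n)^(-n) - e^s| ≤ 1/(e·n). -/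
open Filter Real Set

private lemma lower_bound (n : ℝ) (hn : 0 < n) (s : ℝ) (hs : s ≤ 0) :
    Real.exp s ≤ (1 - s / n) ^ (-n : ℝ) := by
  have hb1 : (1:ℝ) ≤ 1 - s / n := by
    have : s / n ≤ 0 := div_nonpos_of_nonpos_of_nonneg hs hn.le
    linarith
  have hbp : (0:ℝ) < 1 - s / n := lt_of_lt_of_le one_pos hb1
  rw [Real.rpow_def_of_pos hbp]
  apply Real.exp_le_exp.2
  have hlog := Real.log_le_sub_one_of_pos hbp
  have h2 : n * Real.log (1 - s / n) ≤ n * (1 - s / n - 1) :=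
    mul_le_mul_of_nonneg_left hlog hn.le
  have h3 : n * (1 - s / n - 1) = -s := by field_simp; ring
  nlinarith

private lemma key_bound (n : ℝ) (hn : 0 < n) (s : ℝ) (hs : s ≤ 0) :
    |(1 - s / n) ^ (-n : ℝ) - Real.exp s| ≤ 1 / (Real.exp 1 * n) := by
  set g : ℝ → ℝ := fun s => (1 - s / n) ^ (-n : ℝ) - Real.exp s with hg
  have hbpos : ∀ x : ℝ, x ≤ 0 → (0:ℝ) < 1 - x / n := by
    intro x hx
    have : x / n ≤ 0 := div_nonpos_of_nonpos_of_nonneg hx hn.le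
    linarith
  rw [abs_of_nonneg (sub_nonneg.2 (lower_bound n hn s hs))]
  -- main claim : g s ≤ 1 / (e * n)
  by_contra hcon
  push_neg at hcon
  -- continuity of g on Iic 0
  have hcont : ContinuousOn g (Set.Iic 0) := by
    apply ContinuousOn.sub
    · apply ContinuousOn.rpow_const
      · exact (continuous_const.sub (continuous_id.div_const n)).continuousOn
      · intro x hx
        exact Or.inl (ne_of_gt (hbpos x hx))
    · exact Real.continuous_exp.continuousOn
  -- g tends to 0 at -∞
  have htop : Tendsto (fun x : ℝ => 1 - x / n) atBot atTop := by
    have h1 : Tendsto (fun x : ℝ => x / n) atBot atBot :=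
      tendsto_id.atBot_div_const hn
    have h2 : Tendsto (fun x : ℝ => -(x / n)) atBot atTop := tendsto_neg_atBot_atTop.comp h1
    simpa [sub_eq_add_neg] using tendsto_atTop_add_const_left atBot 1 h2
  have hrpow0 : Tendsto (fun x : ℝ => x ^ (-n : ℝ)) atTop (nhds 0) := by
    have : (-n : ℝ) < 0 := by linarith
    simpa using tendsto_rpow_neg_atTop hn
  have hgt : Tendsto g atBot (nhds 0) := by
    have h1 : Tendsto (fun x : ℝ => (1 - x / n) ^ (-n : ℝ)) atBot (nhds 0) :=
      hrpow0.comp htop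
    have h2 := h1.sub Real.tendsto_exp_atBot
    simpa using h2
  have hpos0 : (0:ℝ) < 1 / (Real.exp 1 * n) := by positivity
  have hgs0 : 0 < g s := lt_trans hpos0 hcon
  -- eventually small
  have hev : ∀ᶠ x in atBot, g x < g s := hgt.eventually_lt_const hgs0
  obtain ⟨M, hM⟩ := eventually_atBot.1 hev
  set M' := min M s with hM'
  have hM's : M' ≤ s := min_le_right _ _
  have hM'0 : M' ≤ 0 := le_trans hM's hs
  -- max on compact interval
  obtain ⟨c, hcmem, hcmax⟩ :=
    isCompact_Icc.exists_isMaxOn (Set.nonempty_Icc.2 hM'0)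
      (hcont.mono (fun x hx => hx.2))
  have hgc : g s ≤ g c := hcmax ⟨hM's, hs⟩
  have hgc0 : 0 < g c := lt_of_lt_of_le hgs0 hgc
  -- g 0 = 0
  have hg0 : g 0 = 0 := by simp [hg]
  have hc0 : c < 0 := by
    rcases lt_or_eq_of_le hcmem.2 with h | h
    · exact h
    · rw [h, hg0] at hgc0; exact absurd hgc0 (lt_irrefl 0)
  have hcM' : M' < c := by
    rcases lt_or_eq_of_le hcmem.1 with h | h
    · exact h
    · exfalso
      have : g M' < g s := hM M' (min_le_left _ _)
      rw [h] at this
      linarith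
  -- global max on Iic 0
  have hmaxIic : IsMaxOn g (Set.Iic 0) c := by
    intro x hx
    by_cases hxM : M' ≤ x
    · exact hcmax ⟨hxM, hx⟩
    · push_neg at hxM
      have hxM2 : x ≤ M := le_trans hxM.le (min_le_left _ _)
      have : g x < g s := hM x hxM2
      exact le_of_lt (lt_of_lt_of_le this hgc)
  have hloc : IsLocalMax g c := hmaxIic.isLocalMax (Iic_mem_nhds hc0)
  -- derivative of g at c
  have hne : (1 - c / n) ≠ 0 := ne_of_gt (hbpos c hc0.le)
  have hu : HasDerivAt (fun x : ℝ => 1 - x / n) (-(1/n)) c :=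
    ((hasDerivAt_id c).div_const n).const_sub 1
  have hr : HasDerivAt (fun x : ℝ => (1 - x / n) ^ (-n : ℝ))
      ((-(1/n)) * (-n : ℝ) * (1 - c / n) ^ ((-n : ℝ) - 1)) c :=
    hu.rpow_const (Or.inl hne)
  have hcoef : (-(1/n)) * (-n : ℝ) * (1 - c / n) ^ ((-n : ℝ) - 1)
      = (1 - c / n) ^ ((-n : ℝ) - 1) := by
    field_simp
  rw [hcoef] at hr
  have hgd : HasDerivAt g ((1 - c / n) ^ ((-n : ℝ) - 1) - Real.exp c) c :=
    hr.sub (Real.hasDerivAt_exp c)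
  have hd0 : (1 - c / n) ^ ((-n : ℝ) - 1) - Real.exp c = 0 :=
    hloc.hasDerivAt_eq_zero hgd
  have hexpc : Real.exp c = (1 - c / n) ^ ((-n : ℝ) - 1) := by linarith
  have hsplit : (1 - c / n) ^ (-n : ℝ)
      = (1 - c / n) ^ ((-n : ℝ) - 1) * (1 - c / n) := by
    rw [← Real.rpow_add_one hne]; ring_nf
  have hgcval : g c = Real.exp c * (-c) / n := by
    simp only [hg]
    rw [hsplit, ← hexpc]
    field_simp
    ring
  -- bound (-c) * exp c ≤ 1 / exp 1
  have hkey : (-c) * Real.exp c ≤ 1 / Real.exp 1 := by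
    have h1 : (-c) ≤ Real.exp (-c - 1) := by
      have := Real.add_one_le_exp (-c - 1)
      linarith
    have h2 : (-c) * Real.exp c ≤ Real.exp (-c - 1) * Real.exp c :=
      mul_le_mul_of_nonneg_right h1 (Real.exp_pos c).le
    have h3 : Real.exp (-c - 1) * Real.exp c = Real.exp (-1) := by
      rw [← Real.exp_add]; ring_nf
    rw [h3] at h2
    rw [Real.exp_neg] at h2
    rw [one_div]
    exact h2
  have hfin : g c ≤ 1 / (Real.exp 1 * n) := by
    rw [hgcval]
    rw [div_le_div_iff₀ hn (by positivity)]
    have : Real.exp c * (-c) ≤ 1 / Real.exp 1 := by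
      rw [mul_comm]; exact hkey
    calc Real.exp c * (-c) * (Real.exp 1 * n)
        ≤ (1 / Real.exp 1) * (Real.exp 1 * n) := by
          apply mul_le_mul_of_nonneg_right this
          positivity
      _ = 1 * n := by field_simp
  have hcon' : 1 / (Real.exp 1 * n) < g s := hcon
  exact absurd hfin (not_le.2 (lt_of_lt_of_le hcon' hgc))

theorem uniform_bound_and_convergence :
    (∀ n : ℝ, 0 < n → ∀ s ∈ Set.Iic (0 : ℝ),
      |(1 - s / n) ^ (-n : ℝ) - Real.exp s| ≤ 1 / (Real.exp 1 * n)) ∧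
    TendstoUniformlyOn (fun (n : ℝ) (s : ℝ) => (1 - s / n) ^ (-n : ℝ))
      Real.exp Filter.atTop (Set.Iic 0) := by
  have hbd : ∀ n : ℝ, 0 < n → ∀ s ∈ Set.Iic (0 : ℝ),
      |(1 - s / n) ^ (-n : ℝ) - Real.exp s| ≤ 1 / (Real.exp 1 * n) :=
    fun n hn s hs => key_bound n hn s hs
  refine ⟨hbd, ?_⟩
  rw [Metric.tendstoUniformlyOn_iff]
  intro ε hε
  filter_upwards [eventually_gt_atTop (0:ℝ),
    eventually_gt_atTop (1 / (Real.exp 1 * ε))] with n hn hn2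
  intro s hs
  rw [Real.dist_eq, abs_sub_comm]
  have h1 := hbd n hn s hs
  have h2 : 1 / (Real.exp 1 * n) < ε := by
    rw [div_lt_iff₀ (by positivity)] at hn2 ⊢
    nlinarith [Real.exp_pos 1]
  linarith
end

section
/- For every real x ∈ (0, 1] and every real n > 0, setting s = n(x - 1)/x ≤ 0, one has |x^n - e^s| ≤ 1/(e·n), i.e., x^n is uniformly approximated on (0,1] by exp(n(x-1)/x) with error at most 1/(e n). -/
open Real Set

theorem xn_approx_exp (n : ℝ) (hn : 0 < n) (x : ℝ) (hx : x ∈ Set.Ioc (0 : ℝ) 1) :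
    |x ^ (n : ℝ) - Real.exp (n * (x - 1) / x)| ≤ 1 / (Real.exp 1 * n) := by
  obtain ⟨hx0, hx1⟩ := hx
  have hen : 0 < Real.exp 1 * n := by positivity
  -- lower bound: the difference is nonnegative
  have hlog : (x - 1) / x ≤ Real.log x := by
    have h := Real.log_le_sub_one_of_pos (show (0:ℝ) < x⁻¹ by positivity)
    rw [Real.log_inv] at h
    have hx' : x ≠ 0 := ne_of_gt hx0
    have : (x - 1) / x = 1 - x⁻¹ := by field_simp
    linarith [this.ge]
  have hfnonneg : Real.exp (n * (x - 1) / x) ≤ x ^ (n : ℝ) := by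
    rw [Real.rpow_def_of_pos hx0]
    apply Real.exp_le_exp.2
    rw [mul_div_assoc]
    have := mul_le_mul_of_nonneg_left hlog hn.le
    linarith
  rw [abs_of_nonneg (by linarith)]
  -- main upper bound
  by_cases htriv : Real.exp 1 * n ≤ 1
  · have h1 : x ^ (n : ℝ) ≤ 1 := Real.rpow_le_one hx0.le hx1 hn.le
    have h2 : (1:ℝ) ≤ 1 / (Real.exp 1 * n) := by
      rw [le_div_iff₀ hen]; linarith
    have := Real.exp_pos (n * (x - 1) / x)
    linarith
  push_neg at htriv
  set x₀ : ℝ := Real.exp (-(1 + Real.log n) / n) with hx₀def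
  have hx₀pos : 0 < x₀ := Real.exp_pos _
  have hlogn : -1 < Real.log n := by
    have hinv : Real.exp (-1) * Real.exp 1 = 1 := by rw [← Real.exp_add]; norm_num
    have h : Real.exp (-1) < n := by
      nlinarith [mul_pos (Real.exp_pos (-1)) (sub_pos.2 htriv), Real.exp_pos (-1)]
    calc (-1 : ℝ) = Real.log (Real.exp (-1)) := (Real.log_exp _).symm
    _ < Real.log n := Real.log_lt_log (Real.exp_pos _) h
  have hx₀le1 : x₀ ≤ 1 := by
    have h0 : -(1 + Real.log n) / n ≤ 0 :=
      div_nonpos_of_nonpos_of_nonneg (by linarith) hn.le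
    rw [hx₀def]
    calc Real.exp (-(1 + Real.log n) / n) ≤ Real.exp 0 := Real.exp_le_exp.2 h0
    _ = 1 := Real.exp_zero
  have hx₀n : x₀ ^ (n : ℝ) = 1 / (Real.exp 1 * n) := by
    rw [hx₀def, ← Real.exp_mul]
    have hn' : n ≠ 0 := ne_of_gt hn
    have : -(1 + Real.log n) / n * n = -(1 + Real.log n) := by field_simp
    rw [this, Real.exp_neg, Real.exp_add, Real.exp_log hn]
    exact (one_div _).symm
  by_cases hcase : x ≤ x₀
  · have : x ^ (n:ℝ) ≤ x₀ ^ (n:ℝ) := Real.rpow_le_rpow hx0.le hcase hn.le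
    have := Real.exp_pos (n * (x - 1) / x)
    linarith [hx₀n ▸ ‹x ^ (n:ℝ) ≤ x₀ ^ (n:ℝ)›]
  push_neg at hcase
  -- compactness argument on [x₀, 1]
  set f : ℝ → ℝ := fun y => y ^ (n:ℝ) - Real.exp (n * (y - 1) / y) with hf
  have hcont : ContinuousOn f (Icc x₀ 1) := by
    intro y hy
    have hy0 : (0:ℝ) < y := lt_of_lt_of_le hx₀pos hy.1
    apply ContinuousAt.continuousWithinAt
    apply ContinuousAt.sub
    · exact Real.continuousAt_rpow_const y n (Or.inl hy0.ne')
    · exact Real.continuous_exp.continuousAt.comp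
        ((continuousAt_const.mul (continuousAt_id.sub continuousAt_const)).div
          continuousAt_id hy0.ne')
  obtain ⟨c, hcmem, hcmax⟩ := isCompact_Icc.exists_isMaxOn (nonempty_Icc.2 hx₀le1) hcont
  have hxc : f x ≤ f c := hcmax ⟨hcase.le, hx1⟩
  have hbound : f c ≤ 1 / (Real.exp 1 * n) := by
    rcases eq_or_lt_of_le hcmem.1 with h1 | h1
    · -- c = x₀
      subst h1
      have hp := Real.exp_pos (n * (x₀ - 1) / x₀)
      have h' : f x₀ ≤ x₀ ^ (n:ℝ) := by simp only [hf]; linarith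
      rw [hx₀n] at h'
      exact h'
    rcases eq_or_lt_of_le hcmem.2 with h2 | h2
    · -- c = 1
      have : f c = 0 := by simp [hf, h2]
      rw [this]; positivity
    -- interior critical point
    have hc0 : 0 < c := lt_trans hx₀pos h1
    have hd1 : HasDerivAt (fun y : ℝ => y ^ (n:ℝ)) (n * c ^ (n - 1)) c :=
      Real.hasDerivAt_rpow_const (Or.inl hc0.ne')
    have hd2 : HasDerivAt (fun y : ℝ => n * (y - 1) / y)
        ((n * 1 * c - n * (c - 1) * 1) / c ^ 2) c := by
      exact (((hasDerivAt_id c).sub_const 1).const_mul n).div (hasDerivAt_id c) hc0.ne'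
    have hd3 : HasDerivAt (fun y : ℝ => Real.exp (n * (y - 1) / y))
        (Real.exp (n * (c - 1) / c) * ((n * 1 * c - n * (c - 1) * 1) / c ^ 2)) c := hd2.exp
    have hdf : HasDerivAt f
        (n * c ^ (n - 1) - Real.exp (n * (c - 1) / c) * ((n * 1 * c - n * (c - 1) * 1) / c ^ 2))
        c := hd1.sub hd3
    have hlocal : IsLocalMax f c := hcmax.isLocalMax (Icc_mem_nhds h1 h2)
    have hD0 : n * c ^ (n - 1)
        - Real.exp (n * (c - 1) / c) * ((n * 1 * c - n * (c - 1) * 1) / c ^ 2) = 0 := by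
      rw [← hdf.deriv]; exact hlocal.deriv_eq_zero
    have hexp : Real.exp (n * (c - 1) / c) = c ^ (n:ℝ) * c := by
      have hcn : c ^ (n:ℝ) = c ^ (n - 1 : ℝ) * c := by
        rw [← Real.rpow_add_one hc0.ne' (n - 1)]; norm_num
      have hc2 : (0:ℝ) < c ^ 2 := by positivity
      have h : Real.exp (n * (c - 1) / c) * n = n * c ^ (n - 1) * c ^ 2 := by
        have := hD0
        field_simp at this
        nlinarith [this]
      have hn' : n ≠ 0 := ne_of_gt hn
      have : Real.exp (n * (c - 1) / c) = c ^ (n - 1 : ℝ) * c ^ 2 := by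
        field_simp at h ⊢; nlinarith [h]
      rw [this, hcn]; ring
    have hfc : f c = c ^ (n:ℝ) * (1 - c) := by
      simp only [hf]; rw [hexp]; ring
    -- bound c^n (1 - c)
    have hcn_le : c ^ (n:ℝ) ≤ Real.exp (-(n * (1 - c))) := by
      rw [Real.rpow_def_of_pos hc0]
      apply Real.exp_le_exp.2
      have := Real.log_le_sub_one_of_pos hc0
      nlinarith
    set u : ℝ := n * (1 - c) with hu
    have hu0 : 0 < u := by
      apply mul_pos hn; linarith
    have hue : u * Real.exp (-u) ≤ 1 / Real.exp 1 := by
      have h1 : u ≤ Real.exp (u - 1) := by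
        have := Real.add_one_le_exp (u - 1); linarith
      have h2 : Real.exp (u - 1) = Real.exp u / Real.exp 1 := by
        rw [Real.exp_sub]
      have h3 : u * Real.exp 1 ≤ Real.exp u := by
        rw [h2] at h1
        rw [← le_div_iff₀ (Real.exp_pos 1)] at *
        exact h1
      have hmul : Real.exp (-u) * Real.exp u = 1 := by rw [← Real.exp_add]; norm_num
      rw [le_div_iff₀ (Real.exp_pos 1)]
      have h5 : Real.exp (-u) * (u * Real.exp 1) ≤ Real.exp (-u) * Real.exp u :=
        mul_le_mul_of_nonneg_left h3 (Real.exp_pos (-u)).le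
      calc u * Real.exp (-u) * Real.exp 1 = Real.exp (-u) * (u * Real.exp 1) := by ring
      _ ≤ Real.exp (-u) * Real.exp u := h5
      _ = 1 := hmul
    have : f c ≤ u * Real.exp (-u) / n := by
      rw [hfc, hu]
      have h1c : 0 ≤ 1 - c := by linarith
      have := mul_le_mul_of_nonneg_right hcn_le h1c
      calc c ^ (n:ℝ) * (1 - c) ≤ Real.exp (-(n * (1 - c))) * (1 - c) := this
      _ = n * (1 - c) * Real.exp (-(n * (1 - c))) / n := by field_simp
    calc f c ≤ u * Real.exp (-u) / n := this
    _ ≤ (1 / Real.exp 1) / n := by gcongr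
    _ = 1 / (Real.exp 1 * n) := by field_simp
  calc x ^ (n:ℝ) - Real.exp (n * (x - 1) / x) = f x := rfl
  _ ≤ f c := hxc
  _ ≤ 1 / (Real.exp 1 * n) := hbound
end
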